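/- arXiv:2311.18524 — 5 statements merged into one kernel-verified Lean document; each statement's English description precedes it below -/
import Mathlib

section
/- For any binary matrix M ∈ {0,1}^{m×n} with density p = |M|/(mn), the positive discrepancy and negative discrepancy satisfy disc⁻(M) ≥ disc⁺(M)/3 and disc⁺(M) ≥ disc⁻(M)/3. -/
open Finset

/-- Number of 1 entries of the submatrix of `M` with rows `X` and columns `Y`
(for a 0/1 matrix this is just the sum of its entries). -/
noncomputable def ones {m n : ℕ} (M : Matrix (Fin m) (Fin n) ℝ)
    (X : Finset (Fin m)) (Y : Finset (Fin n)) : ℝ :=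
  ∑ i ∈ X, ∑ j ∈ Y, M i j

/-- The density `p = |M|/(mn)`. -/
noncomputable def dens {m n : ℕ} (M : Matrix (Fin m) (Fin n) ℝ) : ℝ :=
  ones M univ univ / (m * n)

/-- `disc(X,Y) = |M[X×Y]| - p|X||Y|`. -/
noncomputable def disc {m n : ℕ} (M : Matrix (Fin m) (Fin n) ℝ)
    (X : Finset (Fin m)) (Y : Finset (Fin n)) : ℝ :=
  ones M X Y - dens M * X.card * Y.card

/-- Positive discrepancy `disc⁺(M) = max_{X,Y} disc(X,Y)`. -/
noncomputable def discP {m n : ℕ} (M : Matrix (Fin m) (Fin n) ℝ) : ℝ :=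
  sup' univ ⟨(∅, ∅), mem_univ _⟩
    (fun XY : Finset (Fin m) × Finset (Fin n) => disc M XY.1 XY.2)

/-- Negative discrepancy `disc⁻(M) = max_{X,Y} (-disc(X,Y))`. -/
noncomputable def discN {m n : ℕ} (M : Matrix (Fin m) (Fin n) ℝ) : ℝ :=
  sup' univ ⟨(∅, ∅), mem_univ _⟩
    (fun XY : Finset (Fin m) × Finset (Fin n) => -disc M XY.1 XY.2)

lemma disc_compl_sum {m n : ℕ} (M : Matrix (Fin m) (Fin n) ℝ)
    (X : Finset (Fin m)) (Y : Finset (Fin n)) :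
    disc M X Y + disc M Xᶜ Y + disc M X Yᶜ + disc M Xᶜ Yᶜ = 0 := by
  have hones : ones M X Y + ones M Xᶜ Y + ones M X Yᶜ + ones M Xᶜ Yᶜ
      = ones M univ univ := by
    unfold ones
    have h1 : ∀ (S : Finset (Fin m)), (∑ i ∈ S, ∑ j ∈ Y, M i j) + (∑ i ∈ S, ∑ j ∈ Yᶜ, M i j)
        = ∑ i ∈ S, ∑ j, M i j := by
      intro S
      rw [← Finset.sum_add_distrib]
      exact Finset.sum_congr rfl fun i _ => Finset.sum_add_sum_compl Y _
    have h2 := Finset.sum_add_sum_compl X (fun i => ∑ j, M i j)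
    have := h1 X
    have := h1 Xᶜ
    linarith
  have hcX : (X.card : ℝ) + (Xᶜ.card : ℝ) = m := by
    rw [← Nat.cast_add, Finset.card_add_card_compl]; simp
  have hcY : (Y.card : ℝ) + (Yᶜ.card : ℝ) = n := by
    rw [← Nat.cast_add, Finset.card_add_card_compl]; simp
  have hdens : dens M * m * n = ones M univ univ := by
    rcases eq_or_ne ((m : ℝ) * n) 0 with h | h
    · have : ones M univ univ = 0 := by
        rcases mul_eq_zero.1 h with h | h
        · have : m = 0 := by exact_mod_cast h
          subst this; simp [ones]
        · have : n = 0 := by exact_mod_cast h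
          subst this; simp [ones]
      rw [this, mul_assoc, h, mul_zero]
    · unfold _root_.dens; rw [mul_assoc, div_mul_cancel₀ _ h]
  have hmn : ((X.card : ℝ) + Xᶜ.card) * ((Y.card : ℝ) + Yᶜ.card) = m * n := by
    rw [hcX, hcY]
  unfold disc
  linear_combination hones - hdens - dens M * hmn

theorem stmt0 (m n : ℕ) (M : Matrix (Fin m) (Fin n) ℝ)
    (hbin : ∀ i j, M i j = 0 ∨ M i j = 1) :
    discN M ≥ discP M / 3 ∧ discP M ≥ discN M / 3 := by
  have hP : discP M ≤ 3 * discN M := by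
    apply Finset.sup'_le
    rintro ⟨X, Y⟩ -
    have h := disc_compl_sum M X Y
    have h1 : -disc M Xᶜ Y ≤ discN M :=
      Finset.le_sup' (fun XY : Finset (Fin m) × Finset (Fin n) => -disc M XY.1 XY.2)
        (Finset.mem_univ (Xᶜ, Y))
    have h2 : -disc M X Yᶜ ≤ discN M :=
      Finset.le_sup' (fun XY : Finset (Fin m) × Finset (Fin n) => -disc M XY.1 XY.2)
        (Finset.mem_univ (X, Yᶜ))
    have h3 : -disc M Xᶜ Yᶜ ≤ discN M :=
      Finset.le_sup' (fun XY : Finset (Fin m) × Finset (Fin n) => -disc M XY.1 XY.2)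
        (Finset.mem_univ (Xᶜ, Yᶜ))
    simp only
    linarith
  have hN : discN M ≤ 3 * discP M := by
    apply Finset.sup'_le
    rintro ⟨X, Y⟩ -
    have h := disc_compl_sum M X Y
    have h1 : disc M Xᶜ Y ≤ discP M :=
      Finset.le_sup' (fun XY : Finset (Fin m) × Finset (Fin n) => disc M XY.1 XY.2)
        (Finset.mem_univ (Xᶜ, Y))
    have h2 : disc M X Yᶜ ≤ discP M :=
      Finset.le_sup' (fun XY : Finset (Fin m) × Finset (Fin n) => disc M XY.1 XY.2)
        (Finset.mem_univ (X, Yᶜ))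
    have h3 : disc M Xᶜ Yᶜ ≤ discP M :=
      Finset.le_sup' (fun XY : Finset (Fin m) × Finset (Fin n) => disc M XY.1 XY.2)
        (Finset.mem_univ (Xᶜ, Yᶜ))
    simp only
    linarith
  constructor <;> linarith
end

section
/- For any binary matrix M ∈ {0,1}^{m×n} (with m, n even), there exist X₀ ⊆ [m] and Y₀ ⊆ [n] with |X₀| = m/2 and |Y₀| = n/2 such that disc(X₀, Y₀) ≤ -disc⁻(M)/12. -/
open Finset

private lemma select {ι : Type*} [DecidableEq ι] :
    ∀ (k : ℕ) (Q : Finset ι) (f : ι → ℝ), k ≤ Q.card →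
    ∃ S, S ⊆ Q ∧ S.card = k ∧ (Q.card : ℝ) * ∑ i ∈ S, f i ≤ (k : ℝ) * ∑ i ∈ Q, f i := by
  intro k
  induction k with
  | zero => intro Q f _; exact ⟨∅, empty_subset _, card_empty, by simp⟩
  | succ k ih =>
    intro Q f hk
    have hQpos : 0 < Q.card := lt_of_lt_of_le (Nat.succ_pos k) hk
    have hQne : Q.Nonempty := card_pos.mp hQpos
    obtain ⟨i, hiQ, hmin⟩ := Q.exists_min_image f hQne
    have hfi : (Q.card : ℝ) * f i ≤ ∑ j ∈ Q, f j := by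
      calc (Q.card : ℝ) * f i = ∑ _j ∈ Q, f i := by rw [sum_const, nsmul_eq_mul]
      _ ≤ ∑ j ∈ Q, f j := sum_le_sum fun j hj => hmin j hj
    obtain ⟨S', hS'Q, hS'card, hS'⟩ := ih (Q.erase i) f (by
      have := card_erase_of_mem hiQ; omega)
    have hiS' : i ∉ S' := fun h => (mem_erase.mp (hS'Q h)).1 rfl
    have hS'sub : S' ⊆ Q := hS'Q.trans (erase_subset _ _)
    refine ⟨insert i S', insert_subset hiQ hS'sub, ?_, ?_⟩
    · rw [card_insert_of_notMem hiS', hS'card]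
    · rw [sum_insert hiS']
      have hsumerase : ∑ j ∈ Q.erase i, f j = ∑ j ∈ Q, f j - f i :=
        sum_erase_eq_sub hiQ
      have hcarderase : (((Q.erase i).card : ℕ) : ℝ) = (Q.card : ℝ) - 1 := by
        rw [card_erase_of_mem hiQ]
        push_cast [Nat.cast_sub hQpos]
        ring
      rw [hsumerase, hcarderase] at hS'
      have hkq : (k : ℝ) + 1 ≤ (Q.card : ℝ) := by exact_mod_cast hk
      by_cases hk0 : k = 0
      · subst hk0
        have hS0 : S' = ∅ := card_eq_zero.mp hS'card
        subst hS0
        push_cast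
        simp only [sum_empty]
        nlinarith [hfi]
      · have hq2 : (2:ℝ) ≤ (Q.card : ℝ) := by
          have h2 : 2 ≤ Q.card := by omega
          exact_mod_cast h2
        have key : 0 ≤ ((Q.card:ℝ) - 1) * (((k:ℝ)+1) * (∑ j ∈ Q, f j)
            - (Q.card:ℝ) * (f i + ∑ j ∈ S', f j)) := by
          have expand : ((Q.card:ℝ) - 1) * (((k:ℝ)+1) * (∑ j ∈ Q, f j)
                - (Q.card:ℝ) * (f i + ∑ j ∈ S', f j))
              = (Q.card:ℝ) * ((k:ℝ) * ((∑ j ∈ Q, f j) - f i)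
                  - ((Q.card:ℝ) - 1) * (∑ j ∈ S', f j))
                + ((Q.card:ℝ) - (k:ℝ) - 1) * ((∑ j ∈ Q, f j) - (Q.card:ℝ) * f i) := by
            ring
          rw [expand]
          have h1 : 0 ≤ (k:ℝ) * ((∑ j ∈ Q, f j) - f i)
              - ((Q.card:ℝ) - 1) * (∑ j ∈ S', f j) := by linarith
          have h2 : 0 ≤ (∑ j ∈ Q, f j) - (Q.card:ℝ) * f i := by linarith
          have hq0 : (0:ℝ) ≤ (Q.card:ℝ) := by positivity
          exact add_nonneg (mul_nonneg hq0 h1) (mul_nonneg (by linarith) h2)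
        have hq1pos : (0:ℝ) < (Q.card:ℝ) - 1 := by linarith
        have hfin := le_of_mul_le_mul_left
          (by nlinarith [key] : ((Q.card:ℝ)-1) * ((Q.card:ℝ) * (f i + ∑ j ∈ S', f j))
            ≤ ((Q.card:ℝ)-1) * (((k:ℝ)+1) * (∑ j ∈ Q, f j))) hq1pos
        push_cast
        linarith

variable {m n : ℕ}

lemma disc_union_left (M : Matrix (Fin m) (Fin n) ℝ) {X X' : Finset (Fin m)}
    (Y : Finset (Fin n)) (h : Disjoint X X') :
    disc M (X ∪ X') Y = disc M X Y + disc M X' Y := by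
  unfold disc ones
  rw [sum_union h, card_union_of_disjoint h]
  push_cast
  ring

lemma disc_union_right (M : Matrix (Fin m) (Fin n) ℝ) (X : Finset (Fin m))
    {Y Y' : Finset (Fin n)} (h : Disjoint Y Y') :
    disc M X (Y ∪ Y') = disc M X Y + disc M X Y' := by
  unfold disc ones
  simp_rw [sum_union h]
  rw [sum_add_distrib, card_union_of_disjoint h]
  push_cast
  ring

lemma disc_row_sum (M : Matrix (Fin m) (Fin n) ℝ) (X : Finset (Fin m))
    (Y : Finset (Fin n)) : disc M X Y = ∑ i ∈ X, disc M {i} Y := by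
  unfold disc ones
  rw [sum_sub_distrib]
  simp [sum_const, card_singleton]
  ring

lemma disc_col_sum (M : Matrix (Fin m) (Fin n) ℝ) (X : Finset (Fin m))
    (Y : Finset (Fin n)) : disc M X Y = ∑ j ∈ Y, disc M X {j} := by
  unfold disc ones
  rw [show (∑ i ∈ X, ∑ j ∈ Y, M i j) = ∑ j ∈ Y, ∑ i ∈ X, M i j from sum_comm, sum_sub_distrib]
  simp [sum_const, card_singleton]
  ring

lemma disc_empty_left (M : Matrix (Fin m) (Fin n) ℝ) (Y : Finset (Fin n)) :
    disc M ∅ Y = 0 := by simp [disc, ones]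

lemma disc_empty_right (M : Matrix (Fin m) (Fin n) ℝ) (X : Finset (Fin m)) :
    disc M X ∅ = 0 := by simp [disc, ones]

lemma disc_univ_univ (M : Matrix (Fin m) (Fin n) ℝ) :
    disc M univ univ = 0 := by
  unfold disc _root_.dens
  rcases eq_or_ne ((m : ℝ) * n) 0 with h | h
  · have : ones M univ univ = 0 := by
      rcases mul_eq_zero.mp h with h' | h'
      · have : m = 0 := by exact_mod_cast h'
        subst this
        simp [ones]
      · have : n = 0 := by exact_mod_cast h'
        subst this
        simp [ones]
    simp [this]
  · rw [card_univ, card_univ, Fintype.card_fin, Fintype.card_fin]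
    field_simp
    have hm' : (m:ℝ) ≠ 0 := left_ne_zero_of_mul h
    have hn' : (n:ℝ) ≠ 0 := right_ne_zero_of_mul h
    rw [div_self h, sub_self, mul_zero]

lemma step_col (M : Matrix (Fin m) (Fin n) ℝ) (X' : Finset (Fin m))
    (P Q : Finset (Fin n)) (hPQ : Disjoint P Q) (k : ℕ) (hk : k ≤ Q.card) :
    ∃ T, T ⊆ Q ∧ T.card = k ∧
      (Q.card : ℝ) * disc M X' (P ∪ T) ≤ Q.card * disc M X' P + k * disc M X' Q := by
  obtain ⟨T, hTQ, hTcard, hT⟩ := select k Q (fun j => disc M X' {j}) hk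
  refine ⟨T, hTQ, hTcard, ?_⟩
  rw [disc_union_right M X' (hPQ.mono_right hTQ), mul_add]
  have h1 : disc M X' T = ∑ j ∈ T, disc M X' {j} := disc_col_sum M X' T
  have h2 : disc M X' Q = ∑ j ∈ Q, disc M X' {j} := disc_col_sum M X' Q
  rw [h1, h2]
  linarith [hT]

lemma step_row (M : Matrix (Fin m) (Fin n) ℝ) (Y' : Finset (Fin n))
    (P Q : Finset (Fin m)) (hPQ : Disjoint P Q) (k : ℕ) (hk : k ≤ Q.card) :
    ∃ S, S ⊆ Q ∧ S.card = k ∧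
      (Q.card : ℝ) * disc M (P ∪ S) Y' ≤ Q.card * disc M P Y' + k * disc M Q Y' := by
  obtain ⟨S, hSQ, hScard, hS⟩ := select k Q (fun i => disc M {i} Y') hk
  refine ⟨S, hSQ, hScard, ?_⟩
  rw [disc_union_left M Y' (hPQ.mono_right hSQ), mul_add]
  have h1 : disc M S Y' = ∑ i ∈ S, disc M {i} Y' := disc_row_sum M S Y'
  have h2 : disc M Q Y' = ∑ i ∈ Q, disc M {i} Y' := disc_row_sum M Q Y'
  rw [h1, h2]
  linarith [hS]

private lemma cancel {c v w : ℝ} (hc : 0 < c) (h : c * v ≤ c * w) : v ≤ w :=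
  le_of_mul_le_mul_left h hc

set_option maxHeartbeats 3000000 in
theorem stmt1 (m n : ℕ) (hm : Even m) (hn : Even n)
    (M : Matrix (Fin m) (Fin n) ℝ)
    (hbin : ∀ i j, M i j = 0 ∨ M i j = 1) :
    ∃ (X₀ : Finset (Fin m)) (Y₀ : Finset (Fin n)),
      X₀.card = m / 2 ∧ Y₀.card = n / 2 ∧
      disc M X₀ Y₀ ≤ -(discN M) / 12 := by
  classical
  set D := discN M with hDdef
  have hDle : ∀ (X' : Finset (Fin m)) (Y' : Finset (Fin n)), -(disc M X' Y') ≤ D := by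
    intro X' Y'
    rw [hDdef]
    unfold discN
    exact le_sup' (fun XY : Finset (Fin m) × Finset (Fin n) => -disc M XY.1 XY.2)
      (mem_univ (X', Y'))
  have hD0 : 0 ≤ D := by have := hDle ∅ ∅; rw [disc_empty_left] at this; linarith
  have hmE := Nat.even_iff.mp hm
  have hnE := Nat.even_iff.mp hn
  rcases Nat.eq_zero_or_pos m with hm0 | hmpos
  · subst hm0
    obtain ⟨Y₀, -, hY₀card⟩ := exists_subset_card_eq (s := (univ : Finset (Fin n))) (n := n / 2)
      (by rw [card_univ, Fintype.card_fin]; exact Nat.div_le_self n 2)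
    refine ⟨∅, Y₀, by simp, hY₀card, ?_⟩
    have hall : ∀ (X' : Finset (Fin 0)) (Y' : Finset (Fin n)), disc M X' Y' = 0 := by
      intro X' Y'
      have hX' : X' = ∅ := Finset.eq_empty_of_isEmpty X'
      rw [hX', disc_empty_left]
    have hDle0 : D ≤ 0 := by
      rw [hDdef]
      apply sup'_le
      intro XY _
      rw [hall XY.1 XY.2]
      norm_num
    rw [hall]
    linarith
  rcases Nat.eq_zero_or_pos n with hn0 | hnpos
  · subst hn0
    obtain ⟨X₀, -, hX₀card⟩ := exists_subset_card_eq (s := (univ : Finset (Fin m))) (n := m / 2)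
      (by rw [card_univ, Fintype.card_fin]; exact Nat.div_le_self m 2)
    refine ⟨X₀, ∅, hX₀card, by simp, ?_⟩
    have hall : ∀ (X' : Finset (Fin m)) (Y' : Finset (Fin 0)), disc M X' Y' = 0 := by
      intro X' Y'
      have hY' : Y' = ∅ := Finset.eq_empty_of_isEmpty Y'
      rw [hY', disc_empty_right]
    have hDle0 : D ≤ 0 := by
      rw [hDdef]
      apply sup'_le
      intro XY _
      rw [hall XY.1 XY.2]
      norm_num
    rw [hall]
    linarith
  -- main case
  have hm2 : ((m / 2 : ℕ) : ℝ) * 2 = (m : ℝ) := by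
    have : m / 2 * 2 = m := by omega
    exact_mod_cast this
  have hn2 : ((n / 2 : ℕ) : ℝ) * 2 = (n : ℝ) := by
    have : n / 2 * 2 = n := by omega
    exact_mod_cast this
  obtain ⟨⟨X, Y⟩, -, hsup⟩ := Finset.exists_mem_eq_sup'
    (⟨((∅ : Finset (Fin m)), (∅ : Finset (Fin n))), mem_univ _⟩)
    (fun XY : Finset (Fin m) × Finset (Fin n) => -disc M XY.1 XY.2)
  have hA : disc M X Y = -D := by
    have : D = -disc M X Y := hsup
    linarith
  have hXdisj : Disjoint X (univ \ X) := disjoint_sdiff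
  have hYdisj : Disjoint Y (univ \ Y) := disjoint_sdiff
  have hXunion : X ∪ (univ \ X) = univ := union_sdiff_of_subset (subset_univ X)
  have hYunion : Y ∪ (univ \ Y) = univ := union_sdiff_of_subset (subset_univ Y)
  have hXcard : X.card ≤ m := by simpa using card_le_univ X
  have hYcard : Y.card ≤ n := by simpa using card_le_univ Y
  have hXccard : (univ \ X).card = m - X.card := by
    rw [card_sdiff_of_subset (subset_univ X), card_univ, Fintype.card_fin]
  have hYccard : (univ \ Y).card = n - Y.card := by
    rw [card_sdiff_of_subset (subset_univ Y), card_univ, Fintype.card_fin]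
  -- the two "one-sided" quantities
  rcases le_total (disc M univ Y) (-(D/3)) with h1 | h1
  · -- Case 1: columns first (relative to all rows), then rows
    have hexY : ∃ Y₀ : Finset (Fin n), Y₀.card = n / 2 ∧ disc M univ Y₀ ≤ -(D/6) := by
      rcases le_total (n / 2) Y.card with hb | hb
      · obtain ⟨T, hTQ, hTcard, hT⟩ := step_col M univ ∅ Y disjoint_bot_left (n / 2) hb
        rw [empty_union, disc_empty_right] at hT
        refine ⟨T, hTcard, ?_⟩
        have hbpos : (0:ℝ) < (Y.card : ℝ) := by
          have : 0 < Y.card := by omega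
          exact_mod_cast this
        apply cancel hbpos
        have e1 : ((n/2 : ℕ) : ℝ) * disc M univ Y ≤ ((n/2:ℕ):ℝ) * (-(D/3)) :=
          mul_le_mul_of_nonneg_left h1 (by positivity)
        have e2 : (Y.card : ℝ) ≤ (n : ℝ) := by exact_mod_cast hYcard
        nlinarith [mul_le_mul_of_nonneg_right e2 (by linarith : (0:ℝ) ≤ D)]
      · obtain ⟨T, hTQ, hTcard, hT⟩ := step_col M univ Y (univ \ Y) hYdisj
          (n / 2 - Y.card) (by omega)
        refine ⟨Y ∪ T, ?_, ?_⟩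
        · rw [card_union_of_disjoint (hYdisj.mono_right hTQ), hTcard]; omega
        · have hYc : disc M univ (univ \ Y) = - disc M univ Y := by
            have h := disc_union_right M univ hYdisj
            rw [hYunion, disc_univ_univ] at h
            linarith
          rw [hYc, hYccard] at hT
          have hcR : ((n - Y.card : ℕ) : ℝ) = (n : ℝ) - Y.card := by
            exact Nat.cast_sub hYcard
          have hkR : ((n/2 - Y.card : ℕ) : ℝ) = ((n/2:ℕ) : ℝ) - Y.card := by
            exact Nat.cast_sub hb
          rw [hcR, hkR] at hT
          have hcpos : (0:ℝ) < (n:ℝ) - Y.card := by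
            have : Y.card < n := by omega
            have h2 : (Y.card : ℝ) < (n : ℝ) := by exact_mod_cast this
            linarith
          apply cancel hcpos
          have e2 : (Y.card : ℝ) ≥ 0 := by positivity
          nlinarith [h1, hD0]
    obtain ⟨Y₀, hY₀card, hY₀⟩ := hexY
    obtain ⟨X₀, -, hX₀card, hX₀⟩ := step_row M Y₀ ∅ univ disjoint_bot_left (m / 2)
      (by rw [card_univ, Fintype.card_fin]; exact Nat.div_le_self m 2)
    rw [empty_union, disc_empty_left] at hX₀
    rw [card_univ, Fintype.card_fin] at hX₀
    refine ⟨X₀, Y₀, hX₀card, hY₀card, ?_⟩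
    have hmpos' : (0:ℝ) < (m:ℝ) := by exact_mod_cast hmpos
    apply cancel hmpos'
    have e1 : ((m/2:ℕ):ℝ) * disc M univ Y₀ ≤ ((m/2:ℕ):ℝ) * (-(D/6)) :=
      mul_le_mul_of_nonneg_left hY₀ (by positivity)
    nlinarith [hD0]
  rcases le_total (disc M X univ) (-(D/3)) with h2 | h2
  · -- Case 2: rows first, then columns over all of univ
    have hexX : ∃ X₀ : Finset (Fin m), X₀.card = m / 2 ∧ disc M X₀ univ ≤ -(D/6) := by
      rcases le_total (m / 2) X.card with ha | ha
      · obtain ⟨S, hSQ, hScard, hS⟩ := step_row M univ ∅ X disjoint_bot_left (m / 2) ha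
        rw [empty_union, disc_empty_left] at hS
        refine ⟨S, hScard, ?_⟩
        have hapos : (0:ℝ) < (X.card : ℝ) := by
          have h0 : 0 < X.card := by omega
          exact_mod_cast h0
        apply cancel hapos
        have e1 : ((m/2 : ℕ) : ℝ) * disc M X univ ≤ ((m/2:ℕ):ℝ) * (-(D/3)) :=
          mul_le_mul_of_nonneg_left h2 (by positivity)
        have e2 : (X.card : ℝ) ≤ (m : ℝ) := by exact_mod_cast hXcard
        nlinarith [mul_le_mul_of_nonneg_right e2 (by linarith : (0:ℝ) ≤ D)]
      · obtain ⟨S, hSQ, hScard, hS⟩ := step_row M univ X (univ \ X) hXdisj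
          (m / 2 - X.card) (by omega)
        refine ⟨X ∪ S, ?_, ?_⟩
        · rw [card_union_of_disjoint (hXdisj.mono_right hSQ), hScard]; omega
        · have hXc : disc M (univ \ X) univ = - disc M X univ := by
            have h := disc_union_left M (univ : Finset (Fin n)) hXdisj
            rw [hXunion, disc_univ_univ] at h
            linarith
          rw [hXc, hXccard] at hS
          have hcR : ((m - X.card : ℕ) : ℝ) = (m : ℝ) - X.card := Nat.cast_sub hXcard
          have hkR : ((m/2 - X.card : ℕ) : ℝ) = ((m/2:ℕ) : ℝ) - X.card := Nat.cast_sub ha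
          rw [hcR, hkR] at hS
          have hcpos : (0:ℝ) < (m:ℝ) - X.card := by
            have h0 : X.card < m := by omega
            have h3 : (X.card : ℝ) < (m : ℝ) := by exact_mod_cast h0
            linarith
          apply cancel hcpos
          have e2 : (0:ℝ) ≤ (X.card : ℝ) := by positivity
          nlinarith [h2, hD0]
    obtain ⟨X₀, hX₀card, hX₀⟩ := hexX
    obtain ⟨Y₀, -, hY₀card, hY₀⟩ := step_col M X₀ ∅ univ disjoint_bot_left (n / 2)
      (by simpa using Nat.div_le_self n 2)
    rw [empty_union, disc_empty_right] at hY₀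
    rw [card_univ, Fintype.card_fin] at hY₀
    refine ⟨X₀, Y₀, hX₀card, hY₀card, ?_⟩
    have hnpos' : (0:ℝ) < (n:ℝ) := by exact_mod_cast hnpos
    apply cancel hnpos'
    have e1 : ((n/2:ℕ):ℝ) * disc M X₀ univ ≤ ((n/2:ℕ):ℝ) * (-(D/6)) :=
      mul_le_mul_of_nonneg_left hX₀ (by positivity)
    nlinarith [hD0]
  · -- Case 3
    have rel2 : disc M X Y + disc M (univ \ X) Y = disc M univ Y := by
      have h := disc_union_left M Y hXdisj; rw [hXunion] at h; linarith
    have rel3 : disc M X Y + disc M X (univ \ Y) = disc M X univ := by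
      have h := disc_union_right M X hYdisj; rw [hYunion] at h; linarith
    have rel4 : disc M (univ \ X) Y + disc M (univ \ X) (univ \ Y)
        = disc M (univ \ X) univ := by
      have h := disc_union_right M (univ \ X) hYdisj; rw [hYunion] at h; linarith
    have rel5 : disc M X univ + disc M (univ \ X) univ = 0 := by
      have h := disc_union_left M (univ : Finset (Fin n)) hXdisj
      rw [hXunion, disc_univ_univ] at h; linarith
    have hE4ge : -(disc M (univ \ X) (univ \ Y)) ≤ D := hDle _ _
    have hB : (2/3) * D ≤ disc M (univ \ X) Y := by linarith
    have hC : (2/3) * D ≤ disc M X (univ \ Y) := by linarith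
    have hBle : disc M (univ \ X) Y ≤ (4/3) * D := by linarith
    have hCle : disc M X (univ \ Y) ≤ (4/3) * D := by linarith
    have hE4le : disc M (univ \ X) (univ \ Y) ≤ -(D/3) := by linarith
    rcases le_total (m / 2) X.card with ha | ha <;>
      rcases le_total (n / 2) Y.card with hb | hb
    · -- m/2 ≤ a, n/2 ≤ b
      obtain ⟨Y₀, -, hY₀card, hY₀⟩ := step_col M X ∅ Y disjoint_bot_left (n/2) hb
      rw [empty_union, disc_empty_right, hA] at hY₀
      have hbpos : (0:ℝ) < (Y.card:ℝ) := by
        have h0 : 0 < Y.card := by omega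
        exact_mod_cast h0
      have hYb : disc M X Y₀ ≤ -(D/2) := by
        apply cancel hbpos
        have e2 : (Y.card : ℝ) ≤ (n:ℝ) := by exact_mod_cast hYcard
        nlinarith [hD0, mul_le_mul_of_nonneg_right e2 (by linarith : (0:ℝ) ≤ D)]
      obtain ⟨X₀, -, hX₀card, hX₀⟩ := step_row M Y₀ ∅ X disjoint_bot_left (m/2) ha
      rw [empty_union, disc_empty_left] at hX₀
      refine ⟨X₀, Y₀, hX₀card, hY₀card, ?_⟩
      have hapos : (0:ℝ) < (X.card:ℝ) := by
        have h0 : 0 < X.card := by omega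
        exact_mod_cast h0
      apply cancel hapos
      have e1 : ((m/2:ℕ):ℝ) * disc M X Y₀ ≤ ((m/2:ℕ):ℝ) * (-(D/2)) :=
        mul_le_mul_of_nonneg_left hYb (by positivity)
      have e2 : (X.card:ℝ) ≤ (m:ℝ) := by exact_mod_cast hXcard
      nlinarith [mul_le_mul_of_nonneg_right e2 (by linarith : (0:ℝ) ≤ D)]
    · -- m/2 ≤ a, b ≤ n/2
      obtain ⟨T, hTQ, hTcard, hT⟩ := step_col M X Y (univ \ Y) hYdisj
        (n/2 - Y.card) (by omega)
      rw [hYccard] at hT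
      have hcR : ((n - Y.card : ℕ) : ℝ) = (n:ℝ) - Y.card := Nat.cast_sub hYcard
      have hkR : ((n/2 - Y.card : ℕ) : ℝ) = ((n/2:ℕ):ℝ) - Y.card := Nat.cast_sub hb
      rw [hcR, hkR, hA] at hT
      have hcpos : (0:ℝ) < (n:ℝ) - Y.card := by
        have h0 : Y.card < n := by omega
        have h3 : (Y.card:ℝ) < (n:ℝ) := by exact_mod_cast h0
        linarith
      have hbcast : (Y.card:ℝ) ≤ ((n/2:ℕ):ℝ) := by exact_mod_cast hb
      have hb0 : (0:ℝ) ≤ (Y.card:ℝ) := by positivity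
      have hYb : disc M X (Y ∪ T) ≤ -(D/3) := by
        apply cancel hcpos
        nlinarith [hT, hD0,
          mul_le_mul_of_nonneg_left hCle (by linarith : (0:ℝ) ≤ ((n/2:ℕ):ℝ) - Y.card),
          mul_nonneg (by linarith : (0:ℝ) ≤ (n:ℝ) - Y.card - 2*(((n/2:ℕ):ℝ) - Y.card)) hD0]
      obtain ⟨X₀, -, hX₀card, hX₀⟩ := step_row M (Y ∪ T) ∅ X disjoint_bot_left (m/2) ha
      rw [empty_union, disc_empty_left] at hX₀
      refine ⟨X₀, Y ∪ T, hX₀card, ?_, ?_⟩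
      · rw [card_union_of_disjoint (hYdisj.mono_right hTQ), hTcard]; omega
      · have hapos : (0:ℝ) < (X.card:ℝ) := by
          have h0 : 0 < X.card := by omega
          exact_mod_cast h0
        apply cancel hapos
        have e1 : ((m/2:ℕ):ℝ) * disc M X (Y ∪ T) ≤ ((m/2:ℕ):ℝ) * (-(D/3)) :=
          mul_le_mul_of_nonneg_left hYb (by positivity)
        have e2 : (X.card:ℝ) ≤ (m:ℝ) := by exact_mod_cast hXcard
        nlinarith [mul_le_mul_of_nonneg_right e2 (by linarith : (0:ℝ) ≤ D)]
    · -- a ≤ m/2, n/2 ≤ b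
      obtain ⟨S, hSQ, hScard, hS⟩ := step_row M Y X (univ \ X) hXdisj
        (m/2 - X.card) (by omega)
      rw [hXccard] at hS
      have hcR : ((m - X.card : ℕ) : ℝ) = (m:ℝ) - X.card := Nat.cast_sub hXcard
      have hkR : ((m/2 - X.card : ℕ) : ℝ) = ((m/2:ℕ):ℝ) - X.card := Nat.cast_sub ha
      rw [hcR, hkR, hA] at hS
      have hcpos : (0:ℝ) < (m:ℝ) - X.card := by
        have h0 : X.card < m := by omega
        have h3 : (X.card:ℝ) < (m:ℝ) := by exact_mod_cast h0
        linarith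
      have hacast : (X.card:ℝ) ≤ ((m/2:ℕ):ℝ) := by exact_mod_cast ha
      have ha0 : (0:ℝ) ≤ (X.card:ℝ) := by positivity
      have hXa : disc M (X ∪ S) Y ≤ -(D/3) := by
        apply cancel hcpos
        nlinarith [hS, hD0,
          mul_le_mul_of_nonneg_left hBle (by linarith : (0:ℝ) ≤ ((m/2:ℕ):ℝ) - X.card),
          mul_nonneg (by linarith : (0:ℝ) ≤ (m:ℝ) - X.card - 2*(((m/2:ℕ):ℝ) - X.card)) hD0]
      obtain ⟨Y₀, -, hY₀card, hY₀⟩ := step_col M (X ∪ S) ∅ Y disjoint_bot_left (n/2) hb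
      rw [empty_union, disc_empty_right] at hY₀
      refine ⟨X ∪ S, Y₀, ?_, hY₀card, ?_⟩
      · rw [card_union_of_disjoint (hXdisj.mono_right hSQ), hScard]; omega
      · have hbpos : (0:ℝ) < (Y.card:ℝ) := by
          have h0 : 0 < Y.card := by omega
          exact_mod_cast h0
        apply cancel hbpos
        have e1 : ((n/2:ℕ):ℝ) * disc M (X ∪ S) Y ≤ ((n/2:ℕ):ℝ) * (-(D/3)) :=
          mul_le_mul_of_nonneg_left hXa (by positivity)
        have e2 : (Y.card:ℝ) ≤ (n:ℝ) := by exact_mod_cast hYcard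
        nlinarith [mul_le_mul_of_nonneg_right e2 (by linarith : (0:ℝ) ≤ D)]
    · -- a ≤ m/2, b ≤ n/2
      obtain ⟨Y₀, -, hY₀card, hY₀⟩ := step_col M (univ \ X) ∅ (univ \ Y)
        disjoint_bot_left (n/2) (by rw [hYccard]; omega)
      rw [empty_union, disc_empty_right, hYccard] at hY₀
      have hcR : ((n - Y.card : ℕ) : ℝ) = (n:ℝ) - Y.card := Nat.cast_sub hYcard
      rw [hcR] at hY₀
      have hcpos : (0:ℝ) < (n:ℝ) - Y.card := by
        have h0 : Y.card < n := by omega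
        have h3 : (Y.card:ℝ) < (n:ℝ) := by exact_mod_cast h0
        linarith
      have hb0 : (0:ℝ) ≤ (Y.card:ℝ) := by positivity
      have hYc6 : disc M (univ \ X) Y₀ ≤ -(D/6) := by
        apply cancel hcpos
        nlinarith [hY₀, hD0, hE4le,
          mul_le_mul_of_nonneg_left hE4le (by positivity : (0:ℝ) ≤ ((n/2:ℕ):ℝ))]
      obtain ⟨X₀, -, hX₀card, hX₀⟩ := step_row M Y₀ ∅ (univ \ X)
        disjoint_bot_left (m/2) (by rw [hXccard]; omega)
      rw [empty_union, disc_empty_left, hXccard] at hX₀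
      have hcRm : ((m - X.card : ℕ) : ℝ) = (m:ℝ) - X.card := Nat.cast_sub hXcard
      rw [hcRm] at hX₀
      refine ⟨X₀, Y₀, hX₀card, hY₀card, ?_⟩
      have hcposm : (0:ℝ) < (m:ℝ) - X.card := by
        have h0 : X.card < m := by omega
        have h3 : (X.card:ℝ) < (m:ℝ) := by exact_mod_cast h0
        linarith
      have ha0 : (0:ℝ) ≤ (X.card:ℝ) := by positivity
      apply cancel hcposm
      have e1 : ((m/2:ℕ):ℝ) * disc M (univ \ X) Y₀ ≤ ((m/2:ℕ):ℝ) * (-(D/6)) :=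
        mul_le_mul_of_nonneg_left hYc6 (by positivity)
      nlinarith [hD0]
end

section
/- Let A be the symmetric adjacency matrix of a bipartite graph with parts of sizes m and n, N = m+n, with orthonormal eigenvectors v₁,...,v_N and eigenvalues λ₁ ≥ ... ≥ λ_N. Let L = (1/2)(eeᵀ - ffᵀ) where e is the all-ones vector and f(i)=1 for i ≤ m, f(i)=-1 for i > m. Then for any a₁,...,a_N ≥ 0 and X = Σᵢ aᵢ vᵢvᵢᵀ, one has ⟨X, A⟩ - p⟨X, L⟩ ≥ Σᵢ aᵢλᵢ - (pN/2)·maxᵢ(aᵢ + a_{N+1-i}), where ⟨·,·⟩ is the Frobenius inner product. -/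
open Finset

/-- Symmetrization: the adjacency matrix `[[0, M],[Mᵀ, 0]]` of the bipartite graph of `M`. -/
noncomputable def symA {m n : ℕ} (M : Matrix (Fin m) (Fin n) ℝ) :
    Matrix (Fin m ⊕ Fin n) (Fin m ⊕ Fin n) ℝ :=
  Matrix.fromBlocks 0 M M.transpose 0

/-- The all-ones vector. -/
def eVec (m n : ℕ) : (Fin m ⊕ Fin n) → ℝ := fun _ => 1

/-- The vector `f` with `f(i)=1` on the first part and `f(i)=-1` on the second. -/
def fVec (m n : ℕ) : (Fin m ⊕ Fin n) → ℝ := Sum.elim (fun _ => 1) (fun _ => -1)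

/-- `L = (1/2)(eeᵀ - ffᵀ)`, the adjacency matrix of the complete bipartite graph. -/
noncomputable def Lmat (m n : ℕ) : Matrix (Fin m ⊕ Fin n) (Fin m ⊕ Fin n) ℝ :=
  (1 / 2 : ℝ) • (Matrix.vecMulVec (eVec m n) (eVec m n) -
    Matrix.vecMulVec (fVec m n) (fVec m n))

/-- Frobenius inner product. -/
noncomputable def frob {m n : ℕ} (X Y : Matrix (Fin m ⊕ Fin n) (Fin m ⊕ Fin n) ℝ) : ℝ :=
  ∑ k, ∑ l, X k l * Y k l

theorem gram (m n : ℕ) (v : Fin (m + n) → (Fin m ⊕ Fin n) → ℝ)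
    (horth : ∀ i j, (∑ k, v i k * v j k) = if i = j then (1 : ℝ) else 0) :
    ∀ k l : Fin m ⊕ Fin n, (∑ i, v i k * v i l) = if k = l then (1 : ℝ) else 0 := by
  intro k l
  set B : Matrix (Fin (m+n)) (Fin (m+n)) ℝ :=
    Matrix.of (fun i j => v i (finSumFinEquiv.symm j)) with hB
  have hBB : B * B.transpose = 1 := by
    ext i j
    simp only [Matrix.mul_apply, Matrix.transpose_apply, hB, Matrix.of_apply, Matrix.one_apply]
    have hs : (∑ x : Fin (m+n), v i (finSumFinEquiv.symm x) * v j (finSumFinEquiv.symm x))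
        = ∑ k, v i k * v j k :=
      (Fintype.sum_equiv finSumFinEquiv (fun k => v i k * v j k) _ (by simp)).symm
    rw [hs, horth]
  have hBtB : B.transpose * B = 1 := mul_eq_one_comm.mp hBB
  have := congrFun (congrFun hBtB (finSumFinEquiv k)) (finSumFinEquiv l)
  simp only [Matrix.mul_apply, Matrix.transpose_apply, hB, Matrix.of_apply, Matrix.one_apply,
    Equiv.symm_apply_apply, EmbeddingLike.apply_eq_iff_eq] at this
  exact this

theorem frobX {m n : ℕ} (v : Fin (m + n) → (Fin m ⊕ Fin n) → ℝ)
    (a : Fin (m + n) → ℝ) (Y : Matrix (Fin m ⊕ Fin n) (Fin m ⊕ Fin n) ℝ) :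
    frob (∑ i, a i • Matrix.vecMulVec (v i) (v i)) Y
      = ∑ i, a i * ∑ k, ∑ l, v i k * v i l * Y k l := by
  simp only [frob, Matrix.sum_apply, Matrix.smul_apply, Matrix.vecMulVec_apply,
    smul_eq_mul, Finset.sum_mul, Finset.mul_sum]
  rw [Finset.sum_congr rfl fun (k : Fin m ⊕ Fin n) (_ : k ∈ univ) =>
    (Finset.sum_comm (s := univ) (t := univ)
      (f := fun l (i : Fin (m+n)) => a i * (v i k * v i l) * Y k l)), Finset.sum_comm]
  refine Finset.sum_congr rfl fun i _ => Finset.sum_congr rfl fun k _ =>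
    Finset.sum_congr rfl fun l _ => by ring

theorem keyid {m n : ℕ} (u w : (Fin m ⊕ Fin n) → ℝ) :
    (∑ k, ∑ l, u k * u l * (w k * w l)) = (∑ k, w k * u k)^2 := by
  rw [sq, Finset.sum_mul_sum]
  exact Finset.sum_congr rfl fun k _ => Finset.sum_congr rfl fun l _ => by ring

theorem stmt5 (m n : ℕ) (hmn : 0 < m + n)
    (M : Matrix (Fin m) (Fin n) ℝ) (hbin : ∀ i j, M i j = 0 ∨ M i j = 1)
    (p : ℝ) (hp0 : 0 ≤ p) (hp1 : p ≤ 1)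
    (lam : Fin (m + n) → ℝ) (v : Fin (m + n) → (Fin m ⊕ Fin n) → ℝ)
    (hdecr : Antitone lam)
    (horth : ∀ i j, (∑ k, v i k * v j k) = if i = j then (1 : ℝ) else 0)
    (heig : ∀ i, (symA M).mulVec (v i) = lam i • v i)
    (hvf : ∀ i k, v i k = fVec m n k * v i.rev k)
    (hlamrev : ∀ i, lam i = -lam i.rev)
    (a : Fin (m + n) → ℝ) (ha : ∀ i, 0 ≤ a i) :
    frob (∑ i, a i • Matrix.vecMulVec (v i) (v i)) (symA M) -
      p * frob (∑ i, a i • Matrix.vecMulVec (v i) (v i)) (Lmat m n) ≥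
    (∑ i, a i * lam i) -
      p * (m + n) / 2 *
        (univ.sup' ⟨(⟨0, hmn⟩ : Fin (m + n)), mem_univ _⟩ fun i => a i + a i.rev) := by

  set c : Fin (m + n) → ℝ := fun i => ∑ k, v i k with hc
  set S := univ.sup' ⟨(⟨0, hmn⟩ : Fin (m + n)), mem_univ _⟩ fun i => a i + a i.rev with hS
  -- term 1
  have h1 : frob (∑ i, a i • Matrix.vecMulVec (v i) (v i)) (symA M) = ∑ i, a i * lam i := by
    rw [frobX]
    refine Finset.sum_congr rfl fun i _ => ?_
    congr 1
    have hmv : ∀ k, (∑ l, (symA M) k l * v i l) = lam i * v i k := by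
      intro k
      have := congrFun (heig i) k
      simpa [Matrix.mulVec, dotProduct] using this
    calc (∑ k, ∑ l, v i k * v i l * (symA M) k l)
        = ∑ k, v i k * ∑ l, (symA M) k l * v i l := by
          refine Finset.sum_congr rfl fun k _ => ?_
          rw [Finset.mul_sum]; exact Finset.sum_congr rfl fun l _ => by ring
      _ = ∑ k, v i k * (lam i * v i k) := by
          refine Finset.sum_congr rfl fun k _ => by rw [hmv]
      _ = lam i * ∑ k, v i k * v i k := by
          rw [Finset.mul_sum]; exact Finset.sum_congr rfl fun k _ => by ring
      _ = lam i := by rw [horth i i]; simp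
  have hf2 : ∀ k, fVec m n k * fVec m n k = 1 := by
    intro k; cases k <;> simp [fVec]
  have hcf : ∀ i, (∑ k, fVec m n k * v i k) = c i.rev := by
    intro i
    rw [hc]
    refine Finset.sum_congr rfl fun k _ => ?_
    rw [hvf i k, ← mul_assoc, hf2, one_mul]
  -- term 2 value
  have h2 : frob (∑ i, a i • Matrix.vecMulVec (v i) (v i)) (Lmat m n)
      = ∑ i, a i * ((1/2) * (c i ^ 2 - c i.rev ^ 2)) := by
    rw [frobX]
    refine Finset.sum_congr rfl fun i _ => ?_
    congr 1
    have hsplit : (∑ k, ∑ l, v i k * v i l * (Lmat m n) k l)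
        = (1/2) * (∑ k, ∑ l, v i k * v i l * (eVec m n k * eVec m n l))
          - (1/2) * (∑ k, ∑ l, v i k * v i l * (fVec m n k * fVec m n l)) := by
      rw [Finset.mul_sum, Finset.mul_sum, ← Finset.sum_sub_distrib]
      refine Finset.sum_congr rfl fun k _ => ?_
      rw [Finset.mul_sum, Finset.mul_sum, ← Finset.sum_sub_distrib]
      refine Finset.sum_congr rfl fun l _ => ?_
      simp only [Lmat, Matrix.smul_apply, Matrix.sub_apply, Matrix.vecMulVec_apply,
        smul_eq_mul]
      ring
    rw [hsplit, keyid, keyid, hcf]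
    have he : (∑ k, eVec m n k * v i k) = c i := by
      rw [hc]; exact Finset.sum_congr rfl fun k _ => by simp [eVec]
    rw [he]; ring
  -- sum of c² = N
  have hgram := gram m n v horth
  have hc2 : (∑ i, c i ^ 2) = (m + n : ℝ) := by
    have e1 : (∑ i, c i ^ 2) = ∑ i, ∑ k, ∑ l, v i k * v i l := by
      refine Finset.sum_congr rfl fun i _ => ?_
      rw [hc, sq, Finset.sum_mul_sum]
    rw [e1, Finset.sum_comm,
      Finset.sum_congr rfl fun (k : Fin m ⊕ Fin n) (_ : k ∈ univ) =>
        (Finset.sum_comm (s := univ) (t := univ)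
          (f := fun (i : Fin (m+n)) l => v i k * v i l))]
    have e2 : ∀ k : Fin m ⊕ Fin n, (∑ l, ∑ i, v i k * v i l) = 1 := by
      intro k
      rw [Finset.sum_congr rfl fun l _ => hgram k l]
      simp
    rw [Finset.sum_congr rfl fun k _ => e2 k]
    simp
  -- bounds
  have haS : ∀ i, a i ≤ S := by
    intro i
    have h := Finset.le_sup' (f := fun j => a j + a j.rev)
      (s := (univ : Finset (Fin (m+n)))) (b := i) (mem_univ i)
    rw [hS]
    exact le_trans (le_add_of_nonneg_right (ha i.rev)) h
  have hT : (∑ i, a i * ((1/2) * (c i ^ 2 - c i.rev ^ 2))) ≤ (m + n) / 2 * S := by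
    calc (∑ i, a i * ((1/2) * (c i ^ 2 - c i.rev ^ 2)))
        ≤ ∑ i, (1/2) * S * c i ^ 2 := by
          refine Finset.sum_le_sum fun i _ => ?_
          nlinarith [ha i, sq_nonneg (c i.rev), sq_nonneg (c i), haS i, ha i.rev]
      _ = (m + n) / 2 * S := by
          rw [← Finset.mul_sum, hc2]; ring
  have hfin : p * (∑ i, a i * ((1/2) * (c i ^ 2 - c i.rev ^ 2))) ≤ p * ((m + n) / 2 * S) :=
    mul_le_mul_of_nonneg_left hT hp0
  rw [h1, h2, ge_iff_le]
  have : p * (m + n) / 2 * S = p * ((m + n) / 2 * S) := by ring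
  linarith [hfin]
end

section
/- Let M ∈ {0,1}^{n×n} with rank(M) ≤ r and density p(M) = |M|/n² ≤ 1/(8r). Then M contains an all-zero submatrix with n/4 rows and n/4 columns. -/
open Finset

theorem stmt11 (n r : ℕ) (M : Matrix (Fin n) (Fin n) ℝ)
    (hbin : ∀ i j, M i j = 0 ∨ M i j = 1)
    (hrank : M.rank ≤ r)
    (hp : (∑ i, ∑ j, M i j) / (n * n : ℝ) ≤ 1 / (8 * r)) :
    ∃ X Y : Finset (Fin n),
      (n : ℝ) / 4 ≤ X.card ∧ (n : ℝ) / 4 ≤ Y.card ∧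
      ∀ i ∈ X, ∀ j ∈ Y, M i j = 0 := by
  classical
  set T : ℝ := ∑ i, ∑ j, M i j with hT
  have hnonneg : ∀ i j, (0:ℝ) ≤ M i j := by
    intro i j; rcases hbin i j with h | h <;> simp [h]
  have hTnonneg : 0 ≤ T :=
    Finset.sum_nonneg fun i _ => Finset.sum_nonneg fun j _ => hnonneg i j
  have hrow : ∀ i : Fin n,
      (∑ j, M i j) = ((univ.filter (fun j => M i j ≠ 0)).card : ℝ) := by
    intro i
    rw [← Finset.sum_filter_ne_zero]
    have h1 : ∀ j ∈ univ.filter (fun j => M i j ≠ 0), M i j = 1 := by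
      intro j hj
      rcases hbin i j with h | h
      · exact absurd h (by simpa using hj)
      · exact h
    rw [Finset.sum_congr rfl h1]
    simp
  by_cases hT0 : T = 0
  · -- matrix is zero
    have hz : ∀ i j, M i j = 0 := by
      intro i j
      have h1 : ∀ i ∈ (univ : Finset (Fin n)), (0:ℝ) ≤ ∑ j, M i j :=
        fun i _ => Finset.sum_nonneg fun j _ => hnonneg i j
      have h3 : (∑ j, M i j) = 0 :=
        (Finset.sum_eq_zero_iff_of_nonneg h1).mp hT0 i (mem_univ i)
      exact (Finset.sum_eq_zero_iff_of_nonneg fun j _ => hnonneg i j).mp h3 j (mem_univ j)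
    refine ⟨univ, univ, ?_, ?_, fun i _ j _ => hz i j⟩ <;>
      · simp only [card_univ, Fintype.card_fin]
        have : (0:ℝ) ≤ n := Nat.cast_nonneg n
        linarith
  · have hTpos : 0 < T := lt_of_le_of_ne hTnonneg (Ne.symm hT0)
    have hn0 : n ≠ 0 := by
      rintro rfl
      have : T = 0 := by rw [hT]; simp
      exact hT0 this
    have hn : 0 < (n:ℝ) := by exact_mod_cast Nat.pos_of_ne_zero hn0
    have hr0 : r ≠ 0 := by
      rintro rfl
      rw [Nat.cast_zero, mul_zero, div_zero] at hp
      have : 0 < T / (n*n) := div_pos hTpos (by positivity)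
      linarith
    have hr : 0 < (r:ℝ) := by exact_mod_cast Nat.pos_of_ne_zero hr0
    have hpT : T ≤ (n*n) / (8*r) := by
      rw [div_le_div_iff₀ (by positivity) (by positivity)] at hp
      rw [le_div_iff₀ (by positivity)]
      linarith
    set c : ℝ := 2 * T / n with hc
    have hcpos : 0 < c := by positivity
    have hcle : c ≤ n / (4*r) := by
      rw [hc, div_le_div_iff₀ hn (by positivity)]
      have : T * (8*r) ≤ n*n := by
        rw [div_le_div_iff₀ (by positivity) (by positivity)] at hp
        linarith
      nlinarith
    set X : Finset (Fin n) := univ.filter (fun i => ∑ j, M i j ≤ c) with hX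
    -- Markov bound on heavy rows
    have hheavy : ((Xᶜ).card : ℝ) ≤ n / 2 := by
      have h1 : ((Xᶜ).card : ℝ) * c ≤ ∑ i ∈ Xᶜ, ∑ j, M i j := by
        calc ((Xᶜ).card : ℝ) * c = ∑ _i ∈ Xᶜ, c := by
              rw [Finset.sum_const, nsmul_eq_mul]
          _ ≤ ∑ i ∈ Xᶜ, ∑ j, M i j := Finset.sum_le_sum fun i hi => by
              have : ¬ (∑ j, M i j ≤ c) := by
                simpa [hX] using (Finset.mem_compl.mp hi)
              linarith
      have h2 : ∑ i ∈ Xᶜ, ∑ j, M i j ≤ T :=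
        Finset.sum_le_sum_of_subset_of_nonneg (Finset.subset_univ _)
          (fun i _ _ => Finset.sum_nonneg fun j _ => hnonneg i j)
      have h3 : ((Xᶜ).card : ℝ) ≤ T / c := by
        rw [le_div_iff₀ hcpos]; linarith
      have : T / c = n / 2 := by
        rw [hc]; field_simp
      linarith
    have hXcard : (n:ℝ) / 4 ≤ X.card := by
      have := Finset.card_add_card_compl X
      have h4 : (X.card : ℝ) + (Xᶜ.card : ℝ) = n := by
        exact_mod_cast congrArg (Nat.cast : ℕ → ℝ) (by simpa using this)
      linarith
    -- linear algebra: basis of the span of the light rows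
    set s : Set (Fin n → ℝ) := (fun i => M i) '' (X : Set (Fin n)) with hs
    obtain ⟨b, hbsub, hspan, hli⟩ := exists_linearIndependent ℝ s
    have hbfin : b.Finite := ((X.finite_toSet.image _).subset hbsub)
    haveI : Fintype b := hbfin.fintype
    have hbcard : (Set.toFinset b).card ≤ r := by
      have h1 : Module.finrank ℝ (Submodule.span ℝ b) = (Set.toFinset b).card :=
        finrank_span_set_eq_card hli
      have h2 : Submodule.span ℝ b ≤ Submodule.span ℝ (Set.range M) :=
        Submodule.span_mono (hbsub.trans (by
          rintro v ⟨i, _, rfl⟩; exact ⟨i, rfl⟩))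
      have h3 := Submodule.finrank_mono h2
      have h4 : M.rank = Module.finrank ℝ (Submodule.span ℝ (Set.range M)) := M.rank_eq_finrank_span_row
      omega
    set S : Finset (Fin n) :=
      (Set.toFinset b).biUnion (fun v => univ.filter (fun j => v j ≠ 0)) with hS
    have hsupp : ∀ v ∈ Set.toFinset b,
        ((univ.filter (fun j => v j ≠ 0)).card : ℝ) ≤ (n:ℝ) / (4*r) := by
      intro v hv
      obtain ⟨i, hiX, rfl⟩ := hbsub (Set.mem_toFinset.mp hv)
      have hiX' : ∑ j, M i j ≤ c := by simpa [hX] using hiX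
      rw [← hrow i]
      linarith
    have hScard : (S.card : ℝ) ≤ (n:ℝ) / 4 := by
      have h1 : (S.card : ℝ) ≤ ∑ v ∈ Set.toFinset b,
          ((univ.filter (fun j => v j ≠ 0)).card : ℝ) := by
        rw [hS]
        exact_mod_cast Nat.cast_le.mpr (Finset.card_biUnion_le)
      have h2 : ∑ v ∈ Set.toFinset b,
          ((univ.filter (fun j => v j ≠ 0)).card : ℝ)
          ≤ (Set.toFinset b).card * ((n:ℝ) / (4*r)) := by
        rw [← nsmul_eq_mul, ← Finset.sum_const]
        exact Finset.sum_le_sum hsupp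
      have h3 : ((Set.toFinset b).card : ℝ) * ((n:ℝ) / (4*r)) ≤ r * ((n:ℝ)/(4*r)) := by
        apply mul_le_mul_of_nonneg_right _ (by positivity)
        exact_mod_cast hbcard
      have h4 : (r:ℝ) * ((n:ℝ)/(4*r)) = n/4 := by field_simp
      linarith
    refine ⟨X, Sᶜ, hXcard, ?_, ?_⟩
    · have := Finset.card_add_card_compl S
      have h4 : (S.card : ℝ) + (Sᶜ.card : ℝ) = n := by
        exact_mod_cast congrArg (Nat.cast : ℕ → ℝ) (by simpa using this)
      linarith
    · intro i hiX j hj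
      have hjS : j ∉ S := Finset.mem_compl.mp hj
      have hmem : M i ∈ Submodule.span ℝ b := by
        rw [hspan]
        exact Submodule.subset_span ⟨i, hiX, rfl⟩
      have hker : Submodule.span ℝ b ≤ LinearMap.ker (LinearMap.proj (R := ℝ)
          (φ := fun _ : Fin n => ℝ) j) := by
        rw [Submodule.span_le]
        intro v hv
        simp only [SetLike.mem_coe, LinearMap.mem_ker, LinearMap.proj_apply]
        by_contra hne
        exact hjS (Finset.mem_biUnion.mpr ⟨v, Set.mem_toFinset.mpr hv,
          Finset.mem_filter.mpr ⟨mem_univ j, hne⟩⟩)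
      have := hker hmem
      simpa using this
end

section
/- Let M ∈ {0,1}^{n×n} with rank(M) ≤ r. Suppose every row and every column of M contains at most n/(4r) entries equal to 1, and M contains no all-zero submatrix with n/4 rows and n/4 columns. Then M contains a permutation submatrix of size r+1, a contradiction; hence if all row and column sums are at most n/(4r), M contains an n/4 × n/4 all-zero submatrix. -/
open Finset

theorem perm_rank_le {n k : ℕ} (M : Matrix (Fin n) (Fin n) ℝ) (f g : Fin k → Fin n)
    (hfg : ∀ a b, M (f a) (g b) = if a = b then (1:ℝ) else 0) : k ≤ M.rank := by
  have li : LinearIndependent ℝ (fun a => M (f a)) := by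
    rw [Fintype.linearIndependent_iff]
    intro c hc b
    have h := congrFun hc (g b)
    simpa [Finset.sum_apply, hfg, mul_ite, Finset.sum_ite_eq'] using h
  haveI : FiniteDimensional ℝ (Submodule.span ℝ (Set.range M)) :=
    FiniteDimensional.span_of_finite ℝ (Set.finite_range M)
  have hmono : Submodule.span ℝ (Set.range (fun a => M (f a))) ≤
      Submodule.span ℝ (Set.range M) := by
    apply Submodule.span_mono
    rintro _ ⟨a, rfl⟩; exact ⟨f a, rfl⟩
  calc k = Module.finrank ℝ (Submodule.span ℝ (Set.range (fun a => M (f a)))) := by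
        rw [finrank_span_eq_card li, Fintype.card_fin]
    _ ≤ Module.finrank ℝ (Submodule.span ℝ (Set.range M)) := Submodule.finrank_mono hmono
    _ = M.rank := (M.rank_eq_finrank_span_row).symm

theorem greedy13 (n r : ℕ) (hr : 0 < r) (M : Matrix (Fin n) (Fin n) ℝ)
    (hbin : ∀ i j, M i j = 0 ∨ M i j = 1)
    (hrow : ∀ i, (∑ j, M i j) ≤ (n : ℝ) / (4 * r))
    (hcol : ∀ j, (∑ i, M i j) ≤ (n : ℝ) / (4 * r))
    (hno : ∀ X Y : Finset (Fin n), (n : ℝ)/4 ≤ X.card → (n : ℝ)/4 ≤ Y.card →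
      ∃ i ∈ X, ∃ j ∈ Y, M i j = 1) :
    ∀ k, k ≤ r + 1 → ∃ (f g : Fin k → Fin n) (R C : Finset (Fin n)),
      (∀ a b, M (f a) (g b) = if a = b then (1:ℝ) else 0) ∧
      ((n : ℝ) - k * ((n:ℝ)/(4*r)) ≤ R.card) ∧
      ((n : ℝ) - k * ((n:ℝ)/(4*r)) ≤ C.card) ∧
      (∀ i ∈ R, ∀ b, M i (g b) = 0) ∧
      (∀ j ∈ C, ∀ a, M (f a) j = 0) := by
  have hnn : ∀ i j, (0:ℝ) ≤ M i j := by
    intro i j; rcases hbin i j with h | h <;> rw [h] <;> norm_num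
  intro k
  induction k with
  | zero =>
    intro _
    refine ⟨Fin.elim0, Fin.elim0, univ, univ, ?_, ?_, ?_, ?_, ?_⟩
    · exact fun a => a.elim0
    · simp
    · simp
    · exact fun i _ b => b.elim0
    · exact fun j _ a => a.elim0
  | succ k ih =>
    intro hk1
    have hk : k ≤ r := by omega
    obtain ⟨f, g, R, C, hfg, hRcard, hCcard, hR, hC⟩ := ih (by omega)
    have hq : (0:ℝ) ≤ (n:ℝ)/(4*r) := by positivity
    have hrq : (r:ℝ) * ((n:ℝ)/(4*r)) = n/4 := by
      field_simp
    have hkq : (k:ℝ) * ((n:ℝ)/(4*r)) ≤ n/4 := by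
      rw [← hrq]
      exact mul_le_mul_of_nonneg_right (by exact_mod_cast hk) hq
    have hRbig : (n:ℝ)/4 ≤ R.card := by linarith [Nat.cast_nonneg (α := ℝ) n]
    have hCbig : (n:ℝ)/4 ≤ C.card := by linarith [Nat.cast_nonneg (α := ℝ) n]
    obtain ⟨i, hiR, j, hjC, hij1⟩ := hno R C hRbig hCbig
    -- card bound for filtered sets
    have key : ∀ (S : Finset (Fin n)) (w : Fin n → ℝ), (∀ x, w x = 0 ∨ w x = 1) →
        (∑ x, w x) ≤ (n:ℝ)/(4*r) →
        (S.card : ℝ) ≤ (S.filter (fun x => w x = 0)).card + (n:ℝ)/(4*r) := by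
      intro S w hw hsum
      have hw0 : ∀ x, (0:ℝ) ≤ w x := by
        intro x; rcases hw x with h | h <;> rw [h] <;> norm_num
      have hsplit := Finset.card_filter_add_card_filter_not
        (s := S) (p := fun x => w x = 0)
      have hbound : ((S.filter (fun x => ¬ w x = 0)).card : ℝ) ≤ (n:ℝ)/(4*r) := by
        have h1 : ((S.filter (fun x => ¬ w x = 0)).card : ℝ)
            ≤ ∑ x ∈ S.filter (fun x => ¬ w x = 0), w x := by
          rw [Finset.card_eq_sum_ones]
          push_cast
          apply Finset.sum_le_sum
          intro x hx
          rcases Finset.mem_filter.mp hx with ⟨-, hx0⟩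
          rcases hw x with h | h
          · exact absurd h hx0
          · rw [h]
        have h2 : ∑ x ∈ S.filter (fun x => ¬ w x = 0), w x ≤ ∑ x, w x :=
          Finset.sum_le_sum_of_subset_of_nonneg (Finset.subset_univ _)
            (fun x _ _ => hw0 x)
        linarith
      have := hsplit
      have : (S.card : ℝ) = (S.filter (fun x => w x = 0)).card
          + (S.filter (fun x => ¬ w x = 0)).card := by exact_mod_cast this.symm
      linarith
    have hRkey := key R (fun i' => M i' j) (fun i' => hbin i' j) (hcol j)
    have hCkey := key C (fun j' => M i j') (fun j' => hbin i j') (hrow i)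
    refine ⟨Fin.snoc f i, Fin.snoc g j, R.filter (fun i' => M i' j = 0),
      C.filter (fun j' => M i j' = 0), ?_, ?_, ?_, ?_, ?_⟩
    · intro a b
      refine Fin.lastCases ?_ ?_ a
      · refine Fin.lastCases ?_ ?_ b
        · simp [hij1]
        · intro b'
          simp [(Fin.castSucc_lt_last b').ne', hR i hiR b']
      · intro a'
        refine Fin.lastCases ?_ ?_ b
        · simp [(Fin.castSucc_lt_last a').ne, hC j hjC a']
        · intro b'
          simp [hfg a' b', Fin.castSucc_inj]
    · push_cast
      linarith
    · push_cast
      linarith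
    · intro i' hi' b
      rcases Finset.mem_filter.mp hi' with ⟨hi'R, hi'0⟩
      refine Fin.lastCases ?_ ?_ b
      · simpa using hi'0
      · intro b'; simpa using hR i' hi'R b'
    · intro j' hj' a
      rcases Finset.mem_filter.mp hj' with ⟨hj'C, hj'0⟩
      refine Fin.lastCases ?_ ?_ a
      · simpa using hj'0
      · intro a'; simpa using hC j' hj'C a'

/-- If `rank(M) ≤ r` and every row and column of `M` has at most `n/(4r)` ones, then `M`
contains an `n/4 × n/4` all-zero submatrix. -/
theorem stmt13 (n r : ℕ) (M : Matrix (Fin n) (Fin n) ℝ)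
    (hbin : ∀ i j, M i j = 0 ∨ M i j = 1)
    (hrank : M.rank ≤ r)
    (hrow : ∀ i, (∑ j, M i j) ≤ (n : ℝ) / (4 * r))
    (hcol : ∀ j, (∑ i, M i j) ≤ (n : ℝ) / (4 * r)) :
    ∃ X Y : Finset (Fin n),
      (n : ℝ) / 4 ≤ X.card ∧ (n : ℝ) / 4 ≤ Y.card ∧
      ∀ i ∈ X, ∀ j ∈ Y, M i j = 0 := by
  have hnn : ∀ i j, (0:ℝ) ≤ M i j := by
    intro i j; rcases hbin i j with h | h <;> rw [h] <;> norm_num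
  have hcardu : ((univ : Finset (Fin n)).card : ℝ) = n := by simp
  rcases Nat.eq_zero_or_pos r with hr | hr
  · subst hr
    refine ⟨univ, univ, ?_, ?_, ?_⟩
    · rw [hcardu]; linarith [Nat.cast_nonneg (α := ℝ) n]
    · rw [hcardu]; linarith [Nat.cast_nonneg (α := ℝ) n]
    · intro i _ j _
      have h := hrow i
      norm_num at h
      have hle : M i j ≤ ∑ j', M i j' :=
        Finset.single_le_sum (fun j' _ => hnn i j') (Finset.mem_univ j)
      linarith [hnn i j]
  · by_contra hcon
    push_neg at hcon
    have hno : ∀ X Y : Finset (Fin n), (n : ℝ)/4 ≤ X.card → (n : ℝ)/4 ≤ Y.card →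
        ∃ i ∈ X, ∃ j ∈ Y, M i j = 1 := by
      intro X Y hX hY
      obtain ⟨i, hi, j, hj, hij⟩ := hcon X Y hX hY
      exact ⟨i, hi, j, hj, (hbin i j).resolve_left hij⟩
    obtain ⟨f, g, R, C, hfg, -, -, -, -⟩ :=
      greedy13 n r hr M hbin hrow hcol hno (r+1) le_rfl
    have := perm_rank_le M f g hfg
    omega
end
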